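/- Define the minimal trees by 𝒯_0 = ∅, 𝒯_{ξ+1} = {(ξ+1)} ∪ {(ξ+1)⌢t : t ∈ 𝒯_ξ}, and 𝒯_λ = ⋃_{ζ<λ} 𝒯_{ζ+1} for limit λ. Then for every ordinal ξ, 𝒯_ξ is a B-tree on [1,ξ] of order exactly ξ. -/

import Mathlib

open Ordinal

/-- `s` is a proper initial segment of `t`. -/
def ProperPrefix {S : Type*} (s t : List S) : Prop := s <+: t ∧ s ≠ t

/-- The maximal elements of a set of finite sequences with respect to the
proper-initial-segment order. -/
def maxElems {S : Type*} (T : Set (List S)) : Set (List S) :=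
  {t ∈ T | ¬ ∃ u ∈ T, ProperPrefix t u}

/-- The derived tree: remove the maximal elements. -/
def derivTree {S : Type*} (T : Set (List S)) : Set (List S) :=
  {t ∈ T | ∃ u ∈ T, ProperPrefix t u}

/-- Transfinite iterates of the derivation: `d^0 T = T`, `d^(ξ+1) T = (d^ξ T)'`,
and intersections at limit stages. -/
noncomputable def derivIter {S : Type*} (T : Set (List S)) (ξ : Ordinal) : Set (List S) :=
  Ordinal.limitRecOn ξ T (fun _ ih => derivTree ih)
    (fun o _ ih => ⋂ (ζ : Set.Iio o), ih ζ.1 ζ.2)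

/-- A tree on `S`: a set of finite sequences closed under initial segments. -/
def IsTree {S : Type*} (T : Set (List S)) : Prop :=
  ∀ ⦃s t : List S⦄, s <+: t → t ∈ T → s ∈ T

/-- A `B`-tree on `S`: a set of nonempty finite sequences which becomes a tree
after adjoining the empty sequence. -/
def IsBTree {S : Type*} (T : Set (List S)) : Prop :=
  [] ∉ T ∧ ∀ ⦃s t : List S⦄, s ≠ [] → s <+: t → t ∈ T → s ∈ T

/-- `T` has order exactly `ξ`: `ξ` is the least ordinal whose derived tree is empty. -/
def hasOrder {S : Type*} (T : Set (List S)) (ξ : Ordinal) : Prop :=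
  derivIter T ξ = ∅ ∧ ∀ ζ < ξ, derivIter T ζ ≠ ∅

/-- The minimal trees: `𝒯_0 = ∅`, `𝒯_(ξ+1) = {(ξ+1)} ∪ {(ξ+1)⌢t : t ∈ 𝒯_ξ}`,
and `𝒯_λ = ⋃_(ζ<λ) 𝒯_(ζ+1)` at limits. -/
noncomputable def minTree (ξ : Ordinal) : Set (List Ordinal) :=
  Ordinal.limitRecOn ξ ∅
    (fun ζ ih => {l : List Ordinal | l = [Order.succ ζ] ∨ ∃ t ∈ ih, l = Order.succ ζ :: t})
    (fun o ho ih => ⋃ (ζ : Set.Iio o), ih (Order.succ ζ.1) (ho.succ_lt ζ.2))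

/-!
By induction along the recursion, every member of `𝒯_ξ` is a nonempty strictly decreasing
sequence of successor ordinals in `[1, ξ]`, nonempty prefixes of members are members, and a
member all of whose entries exceed `η + 1` can be extended by one more entry above `η`.
Consequently the `η`-th derived tree of `𝒯_ξ` consists of the members all of whose entries
exceed `η`. For `η = ξ` this is empty, while for `η < ξ` it contains a singleton `(a)` with
`η < a`, because the singletons of `𝒯_ξ` are cofinal in `ξ`.
-/

open Order

section derivIter

variable {S : Type*} (T : Set (List S))

theorem derivIter_zero : derivIter T 0 = T :=
  limitRecOn_zero ..

theorem derivIter_succ (η : Ordinal) : derivIter T (succ η) = derivTree (derivIter T η) := by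
  rw [succ_eq_add_one]
  exact limitRecOn_add_one ..

theorem derivIter_of_isSuccLimit {o : Ordinal} (ho : IsSuccLimit o) :
    derivIter T o = ⋂ ζ : Set.Iio o, derivIter T ζ := by
  rw [derivIter, limitRecOn_limit _ _ _ _ ho]
  rfl

end derivIter

theorem minTree_zero : minTree 0 = ∅ :=
  limitRecOn_zero ..

theorem mem_minTree_succ {ζ : Ordinal} {l : List Ordinal} :
    l ∈ minTree (succ ζ) ↔ l = [succ ζ] ∨ ∃ t ∈ minTree ζ, l = succ ζ :: t := by
  rw [minTree, succ_eq_add_one, limitRecOn_add_one]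
  rfl

theorem mem_minTree_of_isSuccLimit {o : Ordinal} (ho : IsSuccLimit o) {l : List Ordinal} :
    l ∈ minTree o ↔ ∃ ζ < o, l ∈ minTree (succ ζ) := by
  rw [minTree, limitRecOn_limit _ _ _ _ ho]
  simp only [Set.mem_iUnion, Subtype.exists, Set.mem_Iio, exists_prop]
  rfl

theorem minTree_induction {P : Ordinal → List Ordinal → Prop}
    (single : ∀ ζ, P (succ ζ) [succ ζ])
    (cons : ∀ ζ, ∀ t ∈ minTree ζ, P ζ t → P (succ ζ) (succ ζ :: t))
    (limit : ∀ o, IsSuccLimit o → ∀ ζ < o, ∀ l, P (succ ζ) l → P o l) :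
    ∀ ξ, ∀ l ∈ minTree ξ, P ξ l := by
  intro ξ
  induction ξ using Ordinal.limitRecOn with
  | zero => simp [minTree_zero]
  | add_one ζ ih =>
    rw [← succ_eq_add_one]
    intro l hl
    obtain rfl | ⟨t, ht, rfl⟩ := mem_minTree_succ.1 hl
    exacts [single ζ, cons ζ t ht (ih t ht)]
  | limit o ho ih =>
    intro l hl
    obtain ⟨ζ, hζ, hl⟩ := (mem_minTree_of_isSuccLimit ho).1 hl
    exact limit o ho ζ hζ l (ih _ (ho.succ_lt hζ) l hl)

theorem ne_nil_of_mem_minTree {ξ : Ordinal} {l : List Ordinal} (hl : l ∈ minTree ξ) :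
    l ≠ [] :=
  minTree_induction (P := fun _ l => l ≠ []) (by simp) (by simp) (fun _ _ _ _ _ h => h) ξ l hl

theorem mem_range_succ_of_mem_minTree {ξ : Ordinal} {l : List Ordinal} (hl : l ∈ minTree ξ) :
    ∀ x ∈ l, x ∈ Set.range succ :=
  minTree_induction (P := fun _ l => ∀ x ∈ l, x ∈ Set.range succ) (by simp)
    (fun ζ _ _ ih x hx => (List.mem_cons.1 hx).elim (fun h => ⟨ζ, h.symm⟩) (ih x))
    (fun _ _ _ _ _ h => h) ξ l hl

theorem le_of_mem_minTree {ξ : Ordinal} {l : List Ordinal} (hl : l ∈ minTree ξ) :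
    ∀ x ∈ l, x ≤ ξ := by
  refine minTree_induction (P := fun ξ l => ∀ x ∈ l, x ≤ ξ) (by simp) ?_ ?_ ξ l hl
  · intro ζ t _ ih x hx
    obtain rfl | hx := List.mem_cons.1 hx
    exacts [le_rfl, (ih x hx).trans (le_succ ζ)]
  · exact fun o ho ζ hζ l ih x hx => (ih x hx).trans (ho.succ_lt hζ).le

theorem pairwise_gt_of_mem_minTree {ξ : Ordinal} {l : List Ordinal} (hl : l ∈ minTree ξ) :
    l.Pairwise (· > ·) := by
  refine minTree_induction (P := fun _ l => l.Pairwise (· > ·)) (by simp) ?_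
    (fun _ _ _ _ _ h => h) ξ l hl
  exact fun ζ t ht ih =>
    List.pairwise_cons.2 ⟨fun x hx => (le_of_mem_minTree ht x hx).trans_lt (lt_succ ζ), ih⟩

theorem minTree_isBTree (ξ : Ordinal) : IsBTree (minTree ξ) := by
  refine ⟨fun h => ne_nil_of_mem_minTree h rfl, fun s l hs hsl hl => ?_⟩
  refine minTree_induction
    (P := fun ξ l => ∀ s, s ≠ [] → s <+: l → s ∈ minTree ξ) ?_ ?_ ?_ ξ l hl s hs hsl
  · intro ζ s hs hsl
    obtain rfl | ⟨s, rfl, hs'⟩ := List.prefix_cons_iff.1 hsl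
    · exact absurd rfl hs
    rw [List.prefix_nil.1 hs']
    exact mem_minTree_succ.2 (Or.inl rfl)
  · intro ζ t _ ih s hs hsl
    obtain rfl | ⟨s, rfl, hst⟩ := List.prefix_cons_iff.1 hsl
    · exact absurd rfl hs
    rcases s with _ | ⟨b, s⟩
    · exact mem_minTree_succ.2 (Or.inl rfl)
    · exact mem_minTree_succ.2 (Or.inr ⟨_, ih _ (List.cons_ne_nil b s) hst, rfl⟩)
  · exact fun o ho ζ hζ l ih s hs hsl =>
      (mem_minTree_of_isSuccLimit ho).2 ⟨ζ, hζ, ih s hs hsl⟩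

theorem exists_singleton_mem_minTree {ξ ζ : Ordinal} (hζ : ζ < ξ) :
    ∃ a, ζ < a ∧ [a] ∈ minTree ξ := by
  rcases zero_or_succ_or_isSuccLimit ξ with rfl | ⟨η, rfl⟩ | ho
  · simp at hζ
  · exact ⟨succ η, hζ, mem_minTree_succ.2 (Or.inl rfl)⟩
  · exact ⟨succ ζ, lt_succ ζ,
      (mem_minTree_of_isSuccLimit ho).2 ⟨ζ, hζ, mem_minTree_succ.2 (Or.inl rfl)⟩⟩

theorem exists_append_mem_minTree {ξ η : Ordinal} {l : List Ordinal} (hl : l ∈ minTree ξ)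
    (hη : ∀ x ∈ l, succ η < x) : ∃ a, η < a ∧ l ++ [a] ∈ minTree ξ := by
  refine minTree_induction
    (P := fun ξ l => ∀ η, (∀ x ∈ l, succ η < x) → ∃ a, η < a ∧ l ++ [a] ∈ minTree ξ)
    ?_ ?_ ?_ ξ l hl η hη
  · intro ζ η hη
    obtain ⟨a, hηa, ha⟩ :=
      exists_singleton_mem_minTree (succ_lt_succ_iff.1 (hη _ (List.mem_singleton_self _)))
    exact ⟨a, hηa, mem_minTree_succ.2 (Or.inr ⟨[a], ha, rfl⟩)⟩
  · intro ζ t _ ih η hη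
    obtain ⟨a, hηa, ha⟩ := ih η fun x hx => hη x (List.mem_cons_of_mem _ hx)
    exact ⟨a, hηa, mem_minTree_succ.2 (Or.inr ⟨t ++ [a], ha, rfl⟩)⟩
  · intro o ho ζ hζ l ih η hη
    obtain ⟨a, hηa, ha⟩ := ih η hη
    exact ⟨a, hηa, (mem_minTree_of_isSuccLimit ho).2 ⟨ζ, hζ, ha⟩⟩

/-- The smallest entry of a decreasing sequence bounds how far it can still be extended; at limit
stages one uses that successor entries never equal the stage. -/
theorem derivIter_eq_setOf_forall_lt {T : Set (List Ordinal)}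
    (hsucc : ∀ l ∈ T, ∀ x ∈ l, x ∈ Set.range succ) (hdec : ∀ l ∈ T, l.Pairwise (· > ·))
    (hext : ∀ l ∈ T, ∀ η, (∀ x ∈ l, succ η < x) → ∃ a, η < a ∧ l ++ [a] ∈ T) (η : Ordinal) :
    derivIter T η = {l ∈ T | ∀ x ∈ l, η < x} := by
  induction η using Ordinal.limitRecOn with
  | zero =>
    rw [derivIter_zero]
    ext l
    refine ⟨fun hl => ⟨hl, fun x hx => ?_⟩, And.left⟩
    obtain ⟨y, rfl⟩ := hsucc l hl x hx
    exact bot_lt_succ y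
  | add_one η ih =>
    rw [← succ_eq_add_one, derivIter_succ, ih]
    ext l
    constructor
    · rintro ⟨⟨hl, -⟩, u, ⟨hu, hηu⟩, ⟨r, rfl⟩, hne⟩
      refine ⟨hl, fun x hx => ?_⟩
      obtain ⟨y, hy⟩ := List.exists_mem_of_ne_nil r (by rintro rfl; simp at hne)
      calc succ η ≤ y := succ_le_of_lt (hηu y (List.mem_append_right _ hy))
        _ < x := (List.pairwise_append.1 (hdec _ hu)).2.2 x hx y hy
    · rintro ⟨hl, hηl⟩
      obtain ⟨a, hηa, ha⟩ := hext l hl η hηl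
      have hηl' : ∀ x ∈ l, η < x := fun x hx => (lt_succ η).trans (hηl x hx)
      refine ⟨⟨hl, hηl'⟩, l ++ [a], ⟨ha, ?_⟩, List.prefix_append l [a], by simp⟩
      simpa [or_imp, forall_and] using And.intro hηl' hηa
  | limit o ho ih =>
    rw [derivIter_of_isSuccLimit T ho]
    ext l
    have hmem : ∀ ζ : Set.Iio o, l ∈ derivIter T ζ ↔ l ∈ T ∧ ∀ x ∈ l, ζ.1 < x := fun ζ => by
      rw [ih ζ.1 ζ.2]; rfl
    simp only [Set.mem_iInter, hmem, Subtype.forall, Set.mem_Iio, Set.mem_ofPred_eq]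
    constructor
    · intro h
      refine ⟨(h 0 ho.bot_lt).1, fun x hx => ?_⟩
      obtain ⟨y, rfl⟩ := hsucc l (h 0 ho.bot_lt).1 x hx
      exact (le_of_forall_lt fun ζ hζ => (h ζ hζ).2 _ hx).lt_of_ne (ho.succ_ne y).symm
    · exact fun ⟨hl, hol⟩ ζ hζ => ⟨hl, fun x hx => hζ.trans (hol x hx)⟩

/-- For every ordinal `ξ`, the minimal tree `𝒯_ξ` is a `B`-tree on `[1,ξ]` of
order exactly `ξ`. -/
theorem minTree_isBTree_order (ξ : Ordinal) :
    IsBTree (minTree ξ) ∧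
    (∀ t ∈ minTree ξ, ∀ x ∈ t, x ∈ Set.Icc 1 ξ) ∧
    hasOrder (minTree ξ) ξ := by
  have hderiv := derivIter_eq_setOf_forall_lt (T := minTree ξ)
    (fun _ => mem_range_succ_of_mem_minTree) (fun _ => pairwise_gt_of_mem_minTree)
    (fun _ hl _ => exists_append_mem_minTree hl)
  refine ⟨minTree_isBTree ξ, fun t ht x hx => ⟨?_, le_of_mem_minTree ht x hx⟩, ?_, fun ζ hζ => ?_⟩
  · obtain ⟨y, rfl⟩ := mem_range_succ_of_mem_minTree ht x hx
    exact one_le_iff_pos.2 (bot_lt_succ y)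
  · rw [hderiv, Set.eq_empty_iff_forall_notMem]
    rintro l ⟨hl, hξl⟩
    obtain ⟨x, hx⟩ := List.exists_mem_of_ne_nil l (ne_nil_of_mem_minTree hl)
    exact (hξl x hx).not_ge (le_of_mem_minTree hl x hx)
  · obtain ⟨a, hζa, ha⟩ := exists_singleton_mem_minTree hζ
    rw [hderiv, ← Set.nonempty_iff_ne_empty]
    exact ⟨[a], ha, by simpa using hζa⟩
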